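/- Let n = n_1 n_2 be a squarefree odd integer not divisible by 7 or 13, with n_1 a product of primes ≡ 1 (mod 3) and n_2 a product of primes ≡ 2 (mod 3), and let S be a T_n-extremal sequence in Z/nZ. Then every prime divisor of n_1 is coprime to at least two terms of S, and every prime divisor of n_2 is coprime to at least one term of S. -/
import Mathlib


open Finset

open scoped Classical

/-- `Tset n` is the set of cubes of units in `ZMod n`. -/
def Tset (n : ℕ) : Set (ZMod n) := {x | ∃ u : (ZMod n)ˣ, ((u : ZMod n)) ^ 3 = x}

/-- A family `x : ι → ZMod n` has a nonempty `A`-weighted zero-sum subsequence. -/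
def HasWZS {n : ℕ} {ι : Type} (A : Set (ZMod n)) (x : ι → ZMod n) : Prop :=
  ∃ I : Finset ι, I.Nonempty ∧ ∃ a : ι → ZMod n, (∀ i ∈ I, a i ∈ A) ∧ ∑ i ∈ I, a i * x i = 0

/-- The weighted Davenport constant `D_A(ZMod n)`. -/
noncomputable def DavA (n : ℕ) (A : Set (ZMod n)) : ℕ :=
  sInf {ℓ : ℕ | 0 < ℓ ∧ ∀ x : Fin ℓ → ZMod n, HasWZS A x}

/-- A family has an `A`-weighted zero-sum subsequence of length exactly `m`. -/
def HasWZSLen {n : ℕ} {ι : Type} (A : Set (ZMod n)) (x : ι → ZMod n) (m : ℕ) : Prop :=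
  ∃ I : Finset ι, I.card = m ∧ ∃ a : ι → ZMod n, (∀ i ∈ I, a i ∈ A) ∧ ∑ i ∈ I, a i * x i = 0

/-- The constant `E_A(ZMod n)`. -/
noncomputable def EA (n : ℕ) (A : Set (ZMod n)) : ℕ :=
  sInf {ℓ : ℕ | 0 < ℓ ∧ ∀ x : Fin ℓ → ZMod n, HasWZSLen A x n}

/-- An `A`-extremal sequence: length `D_A - 1` with no nonempty `A`-weighted zero-sum
subsequence. -/
def IsExtremal {n : ℕ} {ι : Type} [Fintype ι] (A : Set (ZMod n)) (x : ι → ZMod n) : Prop :=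
  Fintype.card ι + 1 = DavA n A ∧ ¬ HasWZS A x

/-- `Omega n` is the number of prime factors of `n` counted with multiplicity. -/
def Omega (n : ℕ) : ℕ := n.primeFactorsList.length

lemma one_mem_Tset (n : ℕ) : (1 : ZMod n) ∈ Tset n := ⟨1, by simp⟩

lemma Tset_map {n m : ℕ} (f : ZMod n →+* ZMod m) {x : ZMod n} (hx : x ∈ Tset n) :
    f x ∈ Tset m := by
  obtain ⟨u, hu⟩ := hx
  exact ⟨Units.map f.toMonoidHom u, by simp [← hu]⟩

lemma Tset_isUnit {n : ℕ} {x : ZMod n} (hx : x ∈ Tset n) : IsUnit x := by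
  obtain ⟨u, hu⟩ := hx
  refine hu ▸ ⟨u ^ 3, by simp⟩

lemma hasWZS_len_self (n : ℕ) (hn : n ≠ 0) (x : Fin n → ZMod n) : HasWZS (Tset n) x := by
  haveI : NeZero n := ⟨hn⟩
  set F : Fin (n+1) → ZMod n := fun k => ∑ i ∈ Finset.univ.filter (fun i : Fin n => (i:ℕ) < (k:ℕ)), x i with hF
  have hcard : Fintype.card (ZMod n) < Fintype.card (Fin (n+1)) := by
    simp [ZMod.card]
  obtain ⟨j, k, hjk, hFe⟩ := Fintype.exists_ne_map_eq_of_card_lt F hcard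
  have hne : (j:ℕ) ≠ (k:ℕ) := fun hh => hjk (Fin.ext hh)
  wlog hlt : (j:ℕ) < (k:ℕ) generalizing j k
  · exact this k j hjk.symm hFe.symm (fun hh => hjk (Fin.ext hh.symm)) (by omega)
  refine ⟨Finset.univ.filter (fun i : Fin n => (j:ℕ) ≤ (i:ℕ) ∧ (i:ℕ) < (k:ℕ)),
    ⟨⟨(j:ℕ), by omega⟩, by simp [hlt]⟩, fun _ => 1, fun i _ => one_mem_Tset n, ?_⟩
  have hsplit := Finset.sum_filter_add_sum_filter_not
    (Finset.univ.filter (fun i : Fin n => (i:ℕ) < (k:ℕ))) (fun i : Fin n => (i:ℕ) < (j:ℕ)) x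
  have e1 : (Finset.univ.filter (fun i : Fin n => (i:ℕ) < (k:ℕ))).filter
      (fun i : Fin n => (i:ℕ) < (j:ℕ)) = Finset.univ.filter (fun i : Fin n => (i:ℕ) < (j:ℕ)) := by
    ext i; simp only [Finset.mem_filter, Finset.mem_univ, true_and]; omega
  have e2 : (Finset.univ.filter (fun i : Fin n => (i:ℕ) < (k:ℕ))).filter
      (fun i : Fin n => ¬ (i:ℕ) < (j:ℕ)) =
      Finset.univ.filter (fun i : Fin n => (j:ℕ) ≤ (i:ℕ) ∧ (i:ℕ) < (k:ℕ)) := by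
    ext i; simp only [Finset.mem_filter, Finset.mem_univ, true_and]; omega
  rw [e1, e2] at hsplit
  have : F j + ∑ i ∈ Finset.univ.filter (fun i : Fin n => (j:ℕ) ≤ (i:ℕ) ∧ (i:ℕ) < (k:ℕ)), x i
      = F k := hsplit
  simp only [one_mul]
  rw [hFe] at this
  have h0 : F k + ∑ i ∈ Finset.univ.filter (fun i : Fin n => (j:ℕ) ≤ (i:ℕ) ∧ (i:ℕ) < (k:ℕ)), x i = F k + 0 := by rw [add_zero]; exact this
  exact add_left_cancel h0

lemma exists_noncube {p : ℕ} (hp : p.Prime) (h3 : p % 3 = 1) :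
    ∃ g : (ZMod p)ˣ, ∀ u : (ZMod p)ˣ, u ^ 3 ≠ g := by
  haveI : Fact p.Prime := ⟨hp⟩
  haveI : Fact (Nat.Prime 3) := ⟨by norm_num⟩
  by_contra hcon
  push_neg at hcon
  have hsurj : Function.Surjective (fun u : (ZMod p)ˣ => u ^ 3) := fun g => hcon g
  have hinj : Function.Injective (fun u : (ZMod p)ˣ => u ^ 3) :=
    Finite.injective_iff_surjective.mpr hsurj
  obtain ⟨h, hh⟩ := exists_prime_orderOf_dvd_card (G := (ZMod p)ˣ) 3 (by
    rw [ZMod.card_units_eq_totient, Nat.totient_prime hp]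
    have := hp.two_le; omega)
  have h1 : h = 1 := hinj (by
    show h ^ 3 = 1 ^ 3
    rw [one_pow, ← hh, pow_orderOf_eq_one])
  rw [h1, orderOf_one] at hh
  norm_num at hh

lemma descent_aux {q m : ℕ} (hq : 1 < q) (hm : m ≠ 0) (hco : Nat.Coprime q m) {N k : ℕ}
    (hk : 0 < k) (c : Fin k → ZMod q)
    (hc : ∀ (J : Finset (Fin k)) (b : Fin k → ZMod q), J.Nonempty →
        (∀ j ∈ J, b j ∈ Tset q) → ∑ j ∈ J, b j * c j ≠ 0)
    (H : ∀ x : Fin (N + k) → ZMod (q * m), HasWZS (Tset (q * m)) x)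
    (y : Fin N → ZMod m) : HasWZS (Tset m) y := by
  haveI : NeZero q := ⟨by omega⟩
  haveI : NeZero m := ⟨hm⟩
  set e := ZMod.chineseRemainder hco with he
  set down : Fin (N + k) → Fin k := fun i => ⟨i.val - N, by have := i.isLt; omega⟩
    with hdown
  set x : Fin (N + k) → ZMod (q * m) := fun i =>
    if h : i.val < N then e.symm (0, y ⟨i.val, h⟩) else e.symm (c (down i), 1) with hxdef
  obtain ⟨I, hIne, a, haT, hsum⟩ := H x
  set f1 : ZMod (q * m) →+* ZMod q := (RingHom.fst _ _).comp e.toRingHom with hf1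
  set f2 : ZMod (q * m) →+* ZMod m := (RingHom.snd _ _).comp e.toRingHom with hf2
  have hf1e : ∀ z : ZMod q × ZMod m, f1 (e.symm z) = z.1 := by
    intro z; simp [hf1]
  have hf2e : ∀ z : ZMod q × ZMod m, f2 (e.symm z) = z.2 := by
    intro z; simp [hf2]
  have hf1x0 : ∀ i : Fin (N + k), i.val < N → f1 (x i) = 0 := by
    intro i h; rw [hxdef]; simp only [dif_pos h]; rw [hf1e]
  have hf1xc : ∀ i : Fin (N + k), ¬ i.val < N → f1 (x i) = c (down i) := by
    intro i h; rw [hxdef]; simp only [dif_neg h]; rw [hf1e]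
  have hf2x : ∀ (i : Fin (N + k)) (h : i.val < N), f2 (x i) = y ⟨i.val, h⟩ := by
    intro i h; rw [hxdef]; simp only [dif_pos h]; rw [hf2e]
  have h1 : ∑ i ∈ I.filter (fun i => i.val < N), f1 (a i) * f1 (x i)
      + ∑ i ∈ I.filter (fun i => ¬ i.val < N), f1 (a i) * f1 (x i) = 0 := by
    rw [Finset.sum_filter_add_sum_filter_not I (fun i => i.val < N)]
    simpa [map_sum, map_mul] using congrArg f1 hsum
  have hz : ∑ i ∈ I.filter (fun i => i.val < N), f1 (a i) * f1 (x i) = 0 :=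
    Finset.sum_eq_zero (fun i hi => by
      rw [hf1x0 i (Finset.mem_filter.mp hi).2, mul_zero])
  rw [hz, zero_add] at h1
  set up : Fin k → Fin (N + k) := fun j => ⟨N + j.val, by omega⟩ with hup
  have hud : ∀ i : Fin (N + k), N ≤ i.val → up (down i) = i := by
    intro i hi; apply Fin.ext; simp [hup, hdown]; omega
  have hIR : I.filter (fun i => ¬ i.val < N) = ∅ := by
    by_contra hne
    have hne' := Finset.nonempty_of_ne_empty hne
    have hinj : ∀ i ∈ I.filter (fun i => ¬ i.val < N), ∀ i' ∈ I.filter (fun i => ¬ i.val < N),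
        down i = down i' → i = i' := by
      intro i hi i' hi' hii
      have h1' : ¬ i.val < N := (Finset.mem_filter.mp hi).2
      have h2' : ¬ i'.val < N := (Finset.mem_filter.mp hi').2
      have hv := congrArg Fin.val hii
      simp only [hdown] at hv
      apply Fin.ext; omega
    have hmem : ∀ j ∈ (I.filter (fun i => ¬ i.val < N)).image down,
        (fun j => f1 (a (up j))) j ∈ Tset q := by
      intro j hj
      obtain ⟨i, hi, rfl⟩ := Finset.mem_image.mp hj
      show f1 (a (up (down i))) ∈ Tset q
      rw [hud i (by have := (Finset.mem_filter.mp hi).2; omega)]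
      exact Tset_map f1 (haT i (Finset.mem_filter.mp hi).1)
    have heq : ∑ jj ∈ (I.filter (fun i => ¬ i.val < N)).image down,
        (fun j => f1 (a (up j))) jj * c jj
        = ∑ i ∈ I.filter (fun i => ¬ i.val < N), f1 (a i) * f1 (x i) := by
      rw [Finset.sum_image hinj]
      refine Finset.sum_congr rfl (fun i hi => ?_)
      have hiN : ¬ i.val < N := (Finset.mem_filter.mp hi).2
      show f1 (a (up (down i))) * c (down i) = _
      rw [hud i (by omega), hf1xc i hiN]
    exact hc _ _ (hne'.image _) hmem (heq.trans h1)
  have hIlow : ∀ i ∈ I, i.val < N := by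
    intro i hi; by_contra hno
    have hmem : i ∈ I.filter (fun i => ¬ i.val < N) := Finset.mem_filter.mpr ⟨hi, hno⟩
    rw [hIR] at hmem
    exact absurd hmem (Finset.notMem_empty i)
  obtain ⟨i0, hi0⟩ := hIne
  have hN : 0 < N := lt_of_le_of_lt (Nat.zero_le _) (hIlow i0 hi0)
  set down2 : Fin (N + k) → Fin N := fun i => ⟨i.val % N, Nat.mod_lt _ hN⟩ with hdown2
  set up2 : Fin N → Fin (N + k) := fun j => ⟨j.val, by omega⟩ with hup2
  have hud2 : ∀ i : Fin (N + k), i.val < N → up2 (down2 i) = i := by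
    intro i hi; apply Fin.ext; simp [hup2, hdown2, Nat.mod_eq_of_lt hi]
  have h2 : ∑ i ∈ I, f2 (a i) * f2 (x i) = 0 := by
    simpa [map_sum, map_mul] using congrArg f2 hsum
  have hinj2 : ∀ i ∈ I, ∀ i' ∈ I, down2 i = down2 i' → i = i' := by
    intro i hi i' hi' hii
    have hv := congrArg Fin.val hii
    simp only [hdown2, Nat.mod_eq_of_lt (hIlow i hi), Nat.mod_eq_of_lt (hIlow i' hi')] at hv
    exact Fin.ext hv
  refine ⟨I.image down2, ⟨down2 i0, Finset.mem_image_of_mem _ hi0⟩,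
    fun j => f2 (a (up2 j)), ?_, ?_⟩
  · intro j hj
    obtain ⟨i, hi, rfl⟩ := Finset.mem_image.mp hj
    show f2 (a (up2 (down2 i))) ∈ Tset m
    rw [hud2 i (hIlow i hi)]
    exact Tset_map f2 (haT i hi)
  · have heq2 : ∑ j ∈ I.image down2, (fun j => f2 (a (up2 j))) j * y j
        = ∑ i ∈ I, f2 (a i) * f2 (x i) := by
      rw [Finset.sum_image hinj2]
      refine Finset.sum_congr rfl (fun i hi => ?_)
      have hiN := hIlow i hi
      show f2 (a (up2 (down2 i))) * y (down2 i) = _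
      rw [hud2 i hiN, hf2x i hiN]
      have hde : down2 i = ⟨i.val, hiN⟩ := by
        apply Fin.ext; simp [hdown2, Nat.mod_eq_of_lt hiN]
      rw [hde]
    exact heq2.trans h2

lemma descent1 {q m : ℕ} (hq : q.Prime) (hm : m ≠ 0) (hco : Nat.Coprime q m) {N : ℕ}
    (H : ∀ x : Fin (N + 1) → ZMod (q * m), HasWZS (Tset (q * m)) x)
    (y : Fin N → ZMod m) : HasWZS (Tset m) y := by
  haveI : Fact q.Prime := ⟨hq⟩
  refine descent_aux hq.one_lt hm hco (by norm_num) (fun _ => 1) ?_ H y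
  intro J b hJ hb hsum
  obtain ⟨j, hj⟩ := hJ
  have hj0 : j = 0 := Subsingleton.elim j 0
  subst hj0
  have hJ1 : J = {0} :=
    Finset.eq_singleton_iff_unique_mem.mpr ⟨hj, fun x _ => Subsingleton.elim x 0⟩
  rw [hJ1, Finset.sum_singleton, mul_one] at hsum
  exact (Tset_isUnit (hb 0 hj)).ne_zero hsum

lemma descent2 {q m : ℕ} (hq : q.Prime) (hq3 : q % 3 = 1) (hm : m ≠ 0)
    (hco : Nat.Coprime q m) {N : ℕ}
    (H : ∀ x : Fin (N + 2) → ZMod (q * m), HasWZS (Tset (q * m)) x)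
    (y : Fin N → ZMod m) : HasWZS (Tset m) y := by
  haveI : Fact q.Prime := ⟨hq⟩
  obtain ⟨g, hg⟩ := exists_noncube hq hq3
  refine descent_aux hq.one_lt hm hco (by norm_num)
    (fun j => if j = 0 then 1 else (g : ZMod q)) ?_ H y
  have hJcases : ∀ J : Finset (Fin 2), J.Nonempty → J = {0} ∨ J = {1} ∨ J = ({0, 1} : Finset (Fin 2)) := by
    decide
  intro J b hJ hb hsum
  rcases hJcases J hJ with hC | hC | hC
  · subst hC
    rw [Finset.sum_singleton] at hsum
    norm_num at hsum
    exact (Tset_isUnit (hb 0 (by simp))).ne_zero hsum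
  · subst hC
    rw [Finset.sum_singleton] at hsum
    norm_num at hsum
    exact (Tset_isUnit (hb 1 (by simp))).ne_zero hsum
  · subst hC
    rw [Finset.sum_insert (by decide), Finset.sum_singleton] at hsum
    norm_num at hsum
    obtain ⟨α, hα⟩ := hb 0 (by simp)
    obtain ⟨β, hβ⟩ := hb 1 (by simp)
    rw [← hα, ← hβ] at hsum
    apply hg (-α * β⁻¹)
    apply Units.ext
    push_cast [Units.val_pow_eq_pow_val, Units.val_mul, Units.val_neg,
      Units.val_inv_eq_inv_val]
    have hβ0 : (β : ZMod q) ≠ 0 := Units.ne_zero β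
    field_simp
    linear_combination -hsum

lemma q_mul_eq_zero {q m : ℕ} (hq : q ≠ 0) (hm : m ≠ 0) (w : ZMod (q * m))
    (h : ZMod.castHom (dvd_mul_left m q) (ZMod m) w = 0) : (q : ZMod (q * m)) * w = 0 := by
  haveI : NeZero (q * m) := ⟨mul_ne_zero hq hm⟩
  have hw : ((w.val : ℕ) : ZMod m) = 0 := by
    rw [← map_natCast (ZMod.castHom (dvd_mul_left m q) (ZMod m)) w.val,
      ZMod.natCast_zmod_val]
    exact h
  have hdvd : m ∣ w.val := (ZMod.natCast_eq_zero_iff _ _).mp hw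
  have h2 : (q * m : ℕ) ∣ q * w.val := mul_dvd_mul_left q hdvd
  calc (q : ZMod (q * m)) * w = ((q * w.val : ℕ) : ZMod (q * m)) := by
        rw [Nat.cast_mul, ZMod.natCast_zmod_val]
    _ = 0 := (ZMod.natCast_eq_zero_iff _ _).mpr h2

lemma Tset_lift {q m : ℕ} (hq : q ≠ 0) (hm : m ≠ 0) {b : ZMod m} (hb : b ∈ Tset m) :
    ∃ a ∈ Tset (q * m), ZMod.castHom (dvd_mul_left m q) (ZMod m) a = b := by
  haveI : NeZero (q * m) := ⟨mul_ne_zero hq hm⟩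
  obtain ⟨u, hu⟩ := hb
  obtain ⟨U, hU⟩ := ZMod.unitsMap_surjective (dvd_mul_left m q) u
  refine ⟨((U : ZMod (q * m))) ^ 3, ⟨U, rfl⟩, ?_⟩
  rw [map_pow]
  have hc : ZMod.castHom (dvd_mul_left m q) (ZMod m) (U : ZMod (q * m)) = (u : ZMod m) := by
    rw [← hU]; rfl
  rw [hc, hu]

lemma ascent {q m : ℕ} (hq : q ≠ 0) (hm : m ≠ 0) {L kk : ℕ} (S : Fin L → ZMod (q * m))
    (e : Fin kk → Fin L) (he : Function.Injective e)
    (t : Fin kk → ZMod (q * m)) (ht : ∀ i, S (e i) = (q : ZMod (q * m)) * t i)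
    (hy : HasWZS (Tset m) (fun i => ZMod.castHom (dvd_mul_left m q) (ZMod m) (t i))) :
    HasWZS (Tset (q * m)) S := by
  classical
  obtain ⟨I, hIne, b, hbT, hbs⟩ := hy
  set A : Fin kk → ZMod (q * m) := fun j =>
    if hbj : b j ∈ Tset m then Classical.choose (Tset_lift hq hm hbj) else 1 with hA
  have hAT : ∀ j, A j ∈ Tset (q * m) := by
    intro j
    rw [hA]
    by_cases hbj : b j ∈ Tset m
    · simp only [dif_pos hbj]; exact (Classical.choose_spec (Tset_lift hq hm hbj)).1
    · simp only [dif_neg hbj]; exact one_mem_Tset _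
  have hAc : ∀ j ∈ I, ZMod.castHom (dvd_mul_left m q) (ZMod m) (A j) = b j := by
    intro j hj
    have hbj := hbT j hj
    rw [hA]; simp only [dif_pos hbj]
    exact (Classical.choose_spec (Tset_lift hq hm hbj)).2
  haveI : Nonempty (Fin kk) := ⟨hIne.choose⟩
  refine ⟨I.image e, hIne.image _, fun i => A (Function.invFun e i), ?_, ?_⟩
  · intro i _
    exact hAT _
  · rw [Finset.sum_image (fun a _ b _ hab => he hab)]
    have hc1 : ∀ j ∈ I, A (Function.invFun e (e j)) * S (e j)
        = (q : ZMod (q * m)) * (A j * t j) := by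
      intro j _
      rw [Function.leftInverse_invFun he j, ht j]; ring
    rw [Finset.sum_congr rfl hc1, ← Finset.mul_sum]
    apply q_mul_eq_zero hq hm
    rw [map_sum]
    have hc2 : ∑ j ∈ I, ZMod.castHom (dvd_mul_left m q) (ZMod m) (A j * t j)
        = ∑ j ∈ I, b j * (ZMod.castHom (dvd_mul_left m q) (ZMod m) (t j)) := by
      refine Finset.sum_congr rfl (fun j hj => ?_)
      rw [map_mul, hAc j hj]
    rw [hc2]
    exact hbs

lemma key {q m : ℕ} (hq : q.Prime) (hm : m ≠ 0) (hco : Nat.Coprime q m) {L : ℕ}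
    (HAll : ∀ x : Fin (L + 1) → ZMod (q * m), HasWZS (Tset (q * m)) x)
    (S : Fin L → ZMod (q * m)) (hnS : ¬ HasWZS (Tset (q * m)) S) :
    (q % 3 = 1 → 1 ≤ L →
      2 ≤ (Finset.univ.filter fun i => ¬ ((q : ZMod (q * m)) ∣ S i)).card) ∧
    1 ≤ (Finset.univ.filter fun i => ¬ ((q : ZMod (q * m)) ∣ S i)).card := by
  classical
  have hq0 : q ≠ 0 := hq.pos.ne'
  constructor
  · intro hq3 hL1
    by_contra hlt
    push_neg at hlt
    -- the divisible part has at least L - 1 elements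
    have hsplit := Finset.card_filter_add_card_filter_not
      (s := (Finset.univ : Finset (Fin L))) (p := fun i => (q : ZMod (q * m)) ∣ S i)
    rw [Finset.card_univ, Fintype.card_fin] at hsplit
    have hD : L - 1 ≤ (Finset.univ.filter fun i => (q : ZMod (q * m)) ∣ S i).card := by omega
    obtain ⟨D', hD'sub, hD'card⟩ := Finset.exists_subset_card_eq hD
    have hcard : Fintype.card ↥D' = L - 1 := by rw [Fintype.card_coe, hD'card]
    let eqv : ↥D' ≃ Fin (L - 1) := Fintype.equivFinOfCardEq hcard
    let e : Fin (L - 1) → Fin L := fun i => (eqv.symm i : Fin L)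
    have he : Function.Injective e := fun i j hij =>
      eqv.symm.injective (Subtype.ext hij)
    have hmem : ∀ i, (q : ZMod (q * m)) ∣ S (e i) := by
      intro i
      have h1 := (eqv.symm i).2
      have h2 := hD'sub h1
      exact (Finset.mem_filter.mp h2).2
    let t : Fin (L - 1) → ZMod (q * m) := fun i => (hmem i).choose
    have ht : ∀ i, S (e i) = (q : ZMod (q * m)) * t i := fun i => (hmem i).choose_spec
    have HAll' : ∀ x : Fin ((L - 1) + 2) → ZMod (q * m), HasWZS (Tset (q * m)) x := by
      rw [show L - 1 + 2 = L + 1 by omega]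
      exact HAll
    have hy := descent2 hq hq3 hm hco HAll'
      (fun i => ZMod.castHom (dvd_mul_left m q) (ZMod m) (t i))
    exact hnS (ascent hq0 hm S e he t ht hy)
  · by_contra hlt
    push_neg at hlt
    have hall : ∀ i, (q : ZMod (q * m)) ∣ S i := by
      intro i
      by_contra hno
      have : i ∈ Finset.univ.filter fun i => ¬ ((q : ZMod (q * m)) ∣ S i) := by
        simp [hno]
      have := Finset.card_pos.mpr ⟨i, this⟩
      omega
    let t : Fin L → ZMod (q * m) := fun i => (hall i).choose
    have ht : ∀ i, S i = (q : ZMod (q * m)) * t i := fun i => (hall i).choose_spec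
    have hy := descent1 hq hm hco HAll
      (fun i => ZMod.castHom (dvd_mul_left m q) (ZMod m) (t i))
    exact hnS (ascent hq0 hm S id (fun _ _ hij => hij) t ht hy)

theorem stmt16 (n n1 n2 : ℕ) (h : n = n1 * n2) (hsf : Squarefree n) (hodd : Odd n)
    (h7 : ¬ (7 ∣ n)) (h13 : ¬ (13 ∣ n))
    (h1 : ∀ p : ℕ, p.Prime → p ∣ n1 → p % 3 = 1)
    (h2 : ∀ q : ℕ, q.Prime → q ∣ n2 → q % 3 = 2)
    (S : Fin (2 * Omega n1 + Omega n2) → ZMod n)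
    (hS : IsExtremal (Tset n) S) :
    (∀ p : ℕ, p.Prime → p ∣ n1 →
      2 ≤ (Finset.univ.filter fun i => ¬ ((p : ZMod n) ∣ S i)).card) ∧
    (∀ q : ℕ, q.Prime → q ∣ n2 →
      1 ≤ (Finset.univ.filter fun i => ¬ ((q : ZMod n) ∣ S i)).card) := by
  classical
  have hn0 : n ≠ 0 := hsf.ne_zero
  have hmem : DavA n (Tset n) ∈ {ℓ : ℕ | 0 < ℓ ∧ ∀ x : Fin ℓ → ZMod n, HasWZS (Tset n) x} :=
    Nat.sInf_mem ⟨n, Nat.pos_of_ne_zero hn0, hasWZS_len_self n hn0⟩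
  have hD : (2 * Omega n1 + Omega n2) + 1 = DavA n (Tset n) := by
    have hcard := hS.1
    simpa using hcard
  have HAll : ∀ x : Fin ((2 * Omega n1 + Omega n2) + 1) → ZMod n, HasWZS (Tset n) x := by
    rw [hD]; exact hmem.2
  have hnS := hS.2
  have hcop : ∀ r : ℕ, r.Prime → ∀ m : ℕ, n = r * m → Nat.Coprime r m ∧ m ≠ 0 := by
    intro r hr m hm
    constructor
    · refine (hr.coprime_iff_not_dvd).mpr (fun hdvd => hr.ne_one ?_)
      have hrr : r * r ∣ n := by rw [hm]; exact mul_dvd_mul_left r hdvd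
      exact Nat.isUnit_iff.mp (hsf r hrr)
    · rintro rfl
      rw [hm] at hn0
      simp at hn0
  constructor
  · intro p hp hpd
    have hpn : p ∣ n := h ▸ hpd.mul_right n2
    obtain ⟨m, hm⟩ := hpn
    obtain ⟨hco, hm0⟩ := hcop p hp m hm
    have hO1 : 1 ≤ Omega n1 := by
      have hn1 : n1 ≠ 0 := by
        rintro rfl
        rw [h] at hn0; simp at hn0
      have hpmem : p ∈ n1.primeFactorsList := (Nat.mem_primeFactorsList hn1).mpr ⟨hp, hpd⟩
      have := List.ne_nil_of_mem hpmem
      have := List.length_pos_iff.mpr this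
      exact this
    subst hm
    exact (key hp hm0 hco HAll S hnS).1 (h1 p hp hpd) (by omega)
  · intro q hq hqd
    have hqn : q ∣ n := h ▸ hqd.mul_left n1
    obtain ⟨m, hm⟩ := hqn
    obtain ⟨hco, hm0⟩ := hcop q hq m hm
    subst hm
    exact (key hq hm0 hco HAll S hnS).2
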